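/- The derivative of the Riemann zeta function at −1 satisfies ζ′(−1) = 2 ∫₀^∞ (w ln w)/(e^{2πw} − 1) dw = 2c, where c = ∫₀^∞ (y log y)/(e^{2πy} − 1) dy. -/

import Mathlib

/-!
Differentiating the functional equation `ζ(1 - s) = 2 (2π)^(-s) Γ(s) cos(πs/2) ζ(s)` at `s = 2`,
where `cos(πs/2)` has a critical point, gives `ζ'(-1) = (1 - γ - log 2π)/12 + ζ'(2)/(2π²)` from
`Γ'(2) = 1 - γ` and `ζ(2) = π²/6`.

For the integral, expand `1/(e^{2πy} - 1) = ∑_{n ≥ 1} e^{-2πny}` and integrate termwise: rescaling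
`Γ'(2) = ∫₀^∞ t log t e^{-t} dt` gives `∫₀^∞ y log y e^{-ay} dy = (1 - γ - log a)/a²`, so the
integral is `∑ (1 - γ - log 2π - log n)/(4π²n²) = (1 - γ - log 2π)/24 + ζ'(2)/(4π²)`, because
`ζ'(2) = -∑ log n/n²`. The termwise integration is justified by the same rescaling applied to
`|y log y| e^{-ay}`, whose integral is `O(log a/a²)`.
-/

open Real Complex

noncomputable def cConst : ℝ := ∫ y in Set.Ioi (0 : ℝ), y * Real.log y / (Real.exp (2 * π * y) - 1)

open MeasureTheory Set Filter Topology

local notation "γ" => Real.eulerMascheroniConstant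

lemma integral_mul_exp_neg : ∫ t in Ioi (0 : ℝ), t * Real.exp (-t) = 1 := by
  rw [← Real.Gamma_two, Real.Gamma_eq_integral two_pos]
  refine setIntegral_congr_fun measurableSet_Ioi fun t _ ↦ ?_
  norm_num [mul_comm]

lemma integrableOn_mul_exp_neg : IntegrableOn (fun t : ℝ ↦ t * Real.exp (-t)) (Ioi 0) :=
  (Real.GammaIntegral_convergent two_pos).congr_fun (fun t _ ↦ by norm_num [mul_comm])
    measurableSet_Ioi

lemma integral_mul_log_mul_exp_neg :
    ∫ t in Ioi (0 : ℝ), t * Real.log t * Real.exp (-t) = 1 - γ := by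
  have hGamma : Complex.Gamma =ᶠ[𝓝 2] Complex.GammaIntegral := by
    filter_upwards [(isOpen_lt continuous_const Complex.continuous_re).mem_nhds
      (show (0 : ℝ) < (2 : ℂ).re by norm_num)] with s hs using Complex.Gamma_eq_integral hs
  have hderiv := (Complex.hasDerivAt_GammaIntegral (s := 2) (by norm_num)).congr_of_eventuallyEq
    hGamma
  have hvalue : HasDerivAt Complex.Gamma ((1 - γ : ℝ) : ℂ) 2 := by
    convert Complex.hasDerivAt_Gamma_nat 1 using 1 <;> norm_num [sub_eq_neg_add]
  have hcomplex := hderiv.unique hvalue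
  have hreal : (∫ t : ℝ in Ioi 0, (t : ℂ) ^ ((2 : ℂ) - 1) * (Real.log t * Real.exp (-t)))
      = ((∫ t in Ioi (0 : ℝ), t * Real.log t * Real.exp (-t) : ℝ) : ℂ) := by
    rw [← integral_complex_ofReal]
    refine setIntegral_congr_fun measurableSet_Ioi fun t _ ↦ ?_
    norm_num [mul_assoc]
  exact_mod_cast hreal ▸ hcomplex

lemma mul_abs_log_le_one_add_sq {x : ℝ} (hx : 0 < x) : x * |Real.log x| ≤ 1 + x ^ 2 := by
  rcases le_or_gt x 1 with h | h
  · have := Real.abs_log_mul_self_lt x hx h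
    rw [abs_mul, abs_of_pos hx] at this
    nlinarith
  · rw [abs_of_nonneg (Real.log_nonneg h.le)]
    nlinarith [Real.log_le_sub_one_of_pos hx]

lemma integrableOn_mul_log_mul_exp_neg :
    IntegrableOn (fun t : ℝ ↦ t * Real.log t * Real.exp (-t)) (Ioi 0) := by
  have hdom : IntegrableOn (fun t : ℝ ↦ Real.exp (-t) + Real.exp (-t) * t ^ ((3 : ℝ) - 1))
      (Ioi 0) :=
    (integrableOn_exp_neg_Ioi 0).add (Real.GammaIntegral_convergent (by norm_num))
  refine hdom.mono' (by fun_prop) ((ae_restrict_iff' measurableSet_Ioi).2 <| .of_forall ?_)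
  intro t (ht : 0 < t)
  have := mul_abs_log_le_one_add_sq ht
  rw [Real.norm_eq_abs, abs_mul, abs_mul, abs_of_pos ht, abs_of_pos (Real.exp_pos _)]
  norm_num
  nlinarith [Real.exp_pos (-t)]

lemma mul_log_mul_exp_neg_mul_eq {a y : ℝ} (ha : 0 < a) (hy : 0 < y) :
    y * Real.log y * Real.exp (-(a * y)) = a⁻¹ * ((a * y) * Real.log (a * y) * Real.exp (-(a * y))
      - Real.log a * ((a * y) * Real.exp (-(a * y)))) := by
  rw [Real.log_mul ha.ne' hy.ne']
  field_simp
  ring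

lemma integrableOn_mul_log_mul_exp_neg_mul {a : ℝ} (ha : 0 < a) :
    IntegrableOn (fun y : ℝ ↦ y * Real.log y * Real.exp (-(a * y))) (Ioi 0) := by
  have hscaled := (integrableOn_Ioi_comp_mul_left_iff
    (fun t ↦ t * Real.log t * Real.exp (-t) - Real.log a * (t * Real.exp (-t))) 0 ha).2
    (by rw [mul_zero]; exact
      integrableOn_mul_log_mul_exp_neg.sub (integrableOn_mul_exp_neg.const_mul _))
  exact IntegrableOn.congr_fun (hscaled.const_mul a⁻¹)
    (fun y hy ↦ (mul_log_mul_exp_neg_mul_eq ha hy).symm) measurableSet_Ioi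

lemma integral_mul_log_mul_exp_neg_mul {a : ℝ} (ha : 0 < a) :
    ∫ y in Ioi (0 : ℝ), y * Real.log y * Real.exp (-(a * y)) = (1 - γ - Real.log a) / a ^ 2 := by
  rw [setIntegral_congr_fun measurableSet_Ioi fun y hy ↦ mul_log_mul_exp_neg_mul_eq ha hy,
    integral_const_mul, integral_comp_mul_left_Ioi
      (fun t ↦ t * Real.log t * Real.exp (-t) - Real.log a * (t * Real.exp (-t))) 0 ha,
    mul_zero, smul_eq_mul, integral_sub integrableOn_mul_log_mul_exp_neg
      (integrableOn_mul_exp_neg.const_mul _), integral_const_mul, integral_mul_log_mul_exp_neg,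
    integral_mul_exp_neg]
  field_simp

lemma integral_norm_mul_log_mul_exp_neg_mul_le {a : ℝ} (ha : 1 ≤ a) :
    ∫ y in Ioi (0 : ℝ), ‖y * Real.log y * Real.exp (-(a * y))‖ ≤
      ((∫ t in Ioi (0 : ℝ), ‖t * Real.log t * Real.exp (-t)‖) + Real.log a) / a ^ 2 := by
  have ha₀ : 0 < a := one_pos.trans_le ha
  set g : ℝ → ℝ := fun t ↦ ‖t * Real.log t * Real.exp (-t)‖ + Real.log a * (t * Real.exp (-t))
  have hg : IntegrableOn g (Ioi 0) :=
    integrableOn_mul_log_mul_exp_neg.norm.add (integrableOn_mul_exp_neg.const_mul _)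
  have hbound : ∀ y ∈ Ioi (0 : ℝ), ‖y * Real.log y * Real.exp (-(a * y))‖ ≤ a⁻¹ * g (a * y) := by
    intro y (hy : 0 < y)
    rw [mul_log_mul_exp_neg_mul_eq ha₀ hy, norm_mul, Real.norm_of_nonneg (by positivity)]
    gcongr
    refine (norm_sub_le _ _).trans_eq ?_
    rw [norm_mul (Real.log a), Real.norm_of_nonneg (Real.log_nonneg ha),
      Real.norm_of_nonneg (r := a * y * _) (by positivity)]
  calc ∫ y in Ioi (0 : ℝ), ‖y * Real.log y * Real.exp (-(a * y))‖
      ≤ ∫ y in Ioi (0 : ℝ), a⁻¹ * g (a * y) := by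
        refine setIntegral_mono_on (integrableOn_mul_log_mul_exp_neg_mul ha₀).norm ?_
          measurableSet_Ioi hbound
        exact ((integrableOn_Ioi_comp_mul_left_iff g 0 ha₀).2 (by rwa [mul_zero])).const_mul _
    _ = _ := by
        rw [integral_const_mul, integral_comp_mul_left_Ioi g 0 ha₀, mul_zero, smul_eq_mul,
          integral_add integrableOn_mul_log_mul_exp_neg.norm (integrableOn_mul_exp_neg.const_mul _),
          integral_const_mul, integral_mul_exp_neg]
        field_simp

lemma hasSum_log_div_sq :
    HasSum (fun n : ℕ ↦ ((Real.log n / (n : ℝ) ^ 2 : ℝ) : ℂ)) (-deriv riemannZeta 2) := by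
  have habs : LSeries.abscissaOfAbsConv 1 < (2 : ℂ).re := by
    rw [LSeries.abscissaOfAbsConv_one]; exact_mod_cast one_lt_two
  have hzeta : riemannZeta =ᶠ[𝓝 2] LSeries 1 := by
    filter_upwards [(isOpen_lt continuous_const Complex.continuous_re).mem_nhds
      (show 1 < (2 : ℂ).re by norm_num)] with s hs using (LSeries_one_eq_riemannZeta hs).symm
  rw [hzeta.deriv_eq, LSeries_deriv habs, neg_neg]
  have hterm : ∀ n : ℕ,
      LSeries.term (LSeries.logMul 1) 2 n = ((Real.log n / (n : ℝ) ^ 2 : ℝ) : ℂ) := by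
    intro n
    rcases eq_or_ne n 0 with rfl | hn
    · simp
    · rw [LSeries.term_of_ne_zero hn, LSeries.logMul, Pi.one_apply, mul_one, Complex.cpow_ofNat,
        ← Complex.ofReal_natCast, ← Complex.ofReal_log n.cast_nonneg]
      norm_cast
  have hsummable := LSeriesSummable_logMul_of_lt_re habs
  rw [LSeriesSummable, funext hterm] at hsummable
  rw [LSeries, funext hterm]
  exact hsummable.hasSum

lemma hasSum_exp_neg_mul_succ {b : ℝ} (hb : 0 < b) :
    HasSum (fun n : ℕ ↦ Real.exp (-(b * (n + 1)))) (Real.exp b - 1)⁻¹ := by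
  have hpow : ∀ n : ℕ, Real.exp (-(b * (n + 1))) = Real.exp (-b) * Real.exp (-b) ^ n := by
    intro n
    rw [← Real.exp_nat_mul, ← Real.exp_add]
    ring_nf
  have hsum : Real.exp (-b) * (1 - Real.exp (-b))⁻¹ = (Real.exp b - 1)⁻¹ := by
    have : 1 < Real.exp b := Real.one_lt_exp_iff.2 hb
    rw [Real.exp_neg]
    field_simp
  simpa only [hpow, hsum] using (hasSum_geometric_of_lt_one (Real.exp_pos _).le
    (Real.exp_lt_one_iff.2 (neg_lt_zero.2 hb))).mul_left (Real.exp (-b))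

lemma HasSum.nat_succ_of_apply_zero {G : Type*} [AddCommGroup G] [TopologicalSpace G]
    [IsTopologicalAddGroup G] {f : ℕ → G} {g : G} (hf : HasSum f g) (h₀ : f 0 = 0) :
    HasSum (fun n ↦ f (n + 1)) g :=
  (hasSum_nat_add_iff 1).2 (by simpa [h₀] using hf)

lemma hasSum_one_div_succ_sq : HasSum (fun n : ℕ ↦ 1 / ((n : ℝ) + 1) ^ 2) (π ^ 2 / 6) := by
  simpa using hasSum_zeta_two.nat_succ_of_apply_zero (by simp)

lemma hasSum_log_succ_div_succ_sq :
    HasSum (fun n : ℕ ↦ ((Real.log (n + 1) / ((n : ℝ) + 1) ^ 2 : ℝ) : ℂ))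
      (-deriv riemannZeta 2) := by
  simpa using hasSum_log_div_sq.nat_succ_of_apply_zero (by simp)

lemma summable_integral_norm_mul_log_mul_exp_neg_two_pi_succ :
    Summable fun n : ℕ ↦
      ∫ y in Ioi (0 : ℝ), ‖y * Real.log y * Real.exp (-(2 * π * (n + 1) * y))‖ := by
  set K := ∫ t in Ioi (0 : ℝ), ‖t * Real.log t * Real.exp (-t)‖
  have hlog : Summable fun n : ℕ ↦ Real.log (n + 1) / ((n : ℝ) + 1) ^ 2 :=
    Complex.summable_ofReal.1 hasSum_log_succ_div_succ_sq.summable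
  refine .of_nonneg_of_le (fun n ↦ integral_nonneg fun _ ↦ norm_nonneg _) (fun n ↦ ?_)
    ((hasSum_one_div_succ_sq.summable.mul_left ((K + Real.log (2 * π)) / (4 * π ^ 2))).add
      (hlog.mul_left (4 * π ^ 2)⁻¹))
  have ha : 1 ≤ 2 * π * (n + 1) := by nlinarith [Real.pi_gt_three, (n.cast_nonneg : (0 : ℝ) ≤ n)]
  refine (integral_norm_mul_log_mul_exp_neg_mul_le ha).trans_eq ?_
  rw [Real.log_mul (by positivity) (by positivity)]
  field_simp
  ring

lemma hasSum_integral_mul_log_mul_exp_neg_two_pi_succ :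
    HasSum (fun n : ℕ ↦ ∫ y in Ioi (0 : ℝ), y * Real.log y * Real.exp (-(2 * π * (n + 1) * y)))
      (∫ y in Ioi (0 : ℝ), y * Real.log y / (Real.exp (2 * π * y) - 1)) := by
  have hpointwise : ∀ y ∈ Ioi (0 : ℝ), ∑' n : ℕ, y * Real.log y *
      Real.exp (-(2 * π * (n + 1) * y)) = y * Real.log y / (Real.exp (2 * π * y) - 1) := by
    intro y (hy : 0 < y)
    rw [div_eq_mul_inv, ← ((hasSum_exp_neg_mul_succ (by positivity : 0 < 2 * π * y)).mul_left
      (y * Real.log y)).tsum_eq]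
    congr with n
    ring_nf
  rw [← setIntegral_congr_fun measurableSet_Ioi hpointwise]
  exact hasSum_integral_of_summable_integral_norm
    (fun n ↦ integrableOn_mul_log_mul_exp_neg_mul (by positivity))
    summable_integral_norm_mul_log_mul_exp_neg_two_pi_succ

lemma ofReal_integral_mul_log_div_exp_two_pi_sub_one :
    ((∫ y in Ioi (0 : ℝ), y * Real.log y / (Real.exp (2 * π * y) - 1) : ℝ) : ℂ) =
      ((1 - γ - Real.log (2 * π)) / 24 : ℝ) + deriv riemannZeta 2 / (4 * π ^ 2) := by
  set A := (1 - γ - Real.log (2 * π)) / (4 * π ^ 2) with hA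
  have hterm : ∀ n : ℕ,
      ∫ y in Ioi (0 : ℝ), y * Real.log y * Real.exp (-(2 * π * (n + 1) * y)) =
        A * (1 / ((n : ℝ) + 1) ^ 2) - (4 * π ^ 2)⁻¹ * (Real.log (n + 1) / ((n : ℝ) + 1) ^ 2) := by
    intro n
    rw [integral_mul_log_mul_exp_neg_mul (by positivity), Real.log_mul (by positivity)
      (by positivity), hA]
    field_simp
    ring
  have hseries := ((Complex.hasSum_ofReal.2 hasSum_one_div_succ_sq).mul_left (A : ℂ)).sub
    (hasSum_log_succ_div_succ_sq.mul_left (4 * π ^ 2 : ℂ)⁻¹)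
  have hintegral := Complex.hasSum_ofReal.2 hasSum_integral_mul_log_mul_exp_neg_two_pi_succ
  simp only [hterm] at hintegral
  push_cast at hintegral hseries
  rw [hintegral.unique hseries, hA]
  push_cast
  field_simp
  ring

lemma deriv_riemannZeta_neg_one_eq :
    deriv riemannZeta (-1) =
      ((1 - γ - Real.log (2 * π)) / 12 : ℝ) + deriv riemannZeta 2 / (2 * π ^ 2) := by
  set G : ℂ → ℂ := fun s ↦ 2 * (2 * π) ^ (-s) * Complex.Gamma s * cos (π * s / 2) * riemannZeta s
  have hfun : riemannZeta =ᶠ[𝓝 (-1)] fun z ↦ G (1 - z) := by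
    filter_upwards [(isOpen_lt Complex.continuous_re continuous_const).mem_nhds
      (show (-1 : ℂ).re < 0 by norm_num)] with z (hz : z.re < 0)
    have hnat : ∀ n : ℕ, 1 - z ≠ -n := fun n h ↦ by
      have := congrArg Complex.re h
      simp at this
      linarith [(n.cast_nonneg : (0 : ℝ) ≤ n)]
    have hone : 1 - z ≠ 1 := fun h ↦ by simp_all
    have h := riemannZeta_one_sub hnat hone
    rwa [sub_sub_cancel] at h
  have hpow := ((hasDerivAt_neg' (2 : ℂ)).const_cpow (c := 2 * π) (Or.inl (by simp [pi_ne_zero])))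
  have hGamma : HasDerivAt Complex.Gamma (1 - γ) 2 := by
    convert Complex.hasDerivAt_Gamma_nat 1 using 1 <;> norm_num [sub_eq_neg_add]
  have hcos : HasDerivAt (fun s : ℂ ↦ cos (π * s / 2)) 0 2 := by
    convert (((hasDerivAt_id' (2 : ℂ)).const_mul (π : ℂ)).div_const 2).ccos using 1
    rw [mul_div_cancel_right₀ _ two_ne_zero, Complex.sin_pi]
    ring
  have hG : HasDerivAt G _ 2 := (((hpow.const_mul 2).mul hGamma).mul hcos).mul
    (differentiableAt_riemannZeta (by norm_num)).hasDerivAt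
  rw [hfun.deriv_eq, deriv_comp_const_sub, show (1 : ℂ) - -1 = 2 by norm_num, hG.deriv]
  have hGamma_two : Complex.Gamma 2 = 1 := by simp
  have hlog : Complex.log (2 * π) = Real.log (2 * π) := by
    rw [Complex.ofReal_log (by positivity)]
    push_cast
    rfl
  simp only [Pi.mul_apply]
  rw [hGamma_two, mul_div_cancel_right₀ _ two_ne_zero, Complex.cos_pi, riemannZeta_two, hlog,
    Complex.cpow_neg, Complex.cpow_ofNat]
  push_cast
  field_simp
  ring

/-- `ζ′(-1) = 2 ∫₀^∞ w ln w/(e^{2πw} - 1) dw = 2c`. -/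
theorem deriv_zeta_neg_one :
    deriv riemannZeta (-1) =
        ((2 * ∫ w in Set.Ioi (0 : ℝ), w * Real.log w / (Real.exp (2 * π * w) - 1) : ℝ) : ℂ) ∧
      deriv riemannZeta (-1) = ((2 * cConst : ℝ) : ℂ) := by
  have h : deriv riemannZeta (-1) =
      ((2 * ∫ w in Set.Ioi (0 : ℝ), w * Real.log w / (Real.exp (2 * π * w) - 1) : ℝ) : ℂ) := by
    rw [deriv_riemannZeta_neg_one_eq, Complex.ofReal_mul,
      ofReal_integral_mul_log_div_exp_two_pi_sub_one]
    push_cast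
    ring
  exact ⟨h, h⟩
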